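/- arXiv:2311.11869 — 4 statements merged into one kernel-verified Lean document; each statement's English description precedes it below -/
import Mathlib

section
/- Let APX be a triangle-free 2-matching of G and OPT be a maximum-cardinality triangle-free 2-matching of G maximizing |APX ∩ OPT| over all maximum triangle-free 2-matchings. Then for every vertex u, the APX-degree of u is at most the OPT-degree of u, i.e., |N_APX(u)| ≤ |N_OPT(u)|. -/
open Finset symmDiff

variable {V : Type*}

/-- Neighbors of `u` via edges in `S`. -/
def nbrs [Fintype V] [DecidableEq V] (S : Finset (Sym2 V)) (u : V) : Finset V :=
  Finset.univ.filter (fun v => s(u, v) ∈ S)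

/-- `M` is a (simple) 2-matching of `G`: a set of edges of `G` giving each vertex degree ≤ 2. -/
def Is2Matching [Fintype V] [DecidableEq V] (G : SimpleGraph V) [DecidableRel G.Adj]
    (M : Finset (Sym2 V)) : Prop :=
  M ⊆ G.edgeFinset ∧ ∀ u : V, (nbrs M u).card ≤ 2

/-- The edge set `S` contains a triangle. -/
def HasTriangle [DecidableEq V] (S : Finset (Sym2 V)) : Prop :=
  ∃ a b c : V, a ≠ b ∧ b ≠ c ∧ a ≠ c ∧ s(a, b) ∈ S ∧ s(b, c) ∈ S ∧ s(a, c) ∈ S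

/-- A triangle-free 2-matching. -/
def IsTF2M [Fintype V] [DecidableEq V] (G : SimpleGraph V) [DecidableRel G.Adj]
    (M : Finset (Sym2 V)) : Prop :=
  Is2Matching G M ∧ ¬ HasTriangle M

/-- The list of edges of a trail given by its vertex sequence. -/
def trailEdges (vs : List V) : List (Sym2 V) :=
  List.zipWith (fun a b => s(a, b)) vs vs.tail

/-- A trail: at least one edge, consecutive vertices distinct, all edges distinct. -/
def IsTrail [DecidableEq V] (vs : List V) : Prop :=
  2 ≤ vs.length ∧ vs.Chain' (· ≠ ·) ∧ (trailEdges vs).Nodup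

/-- Edge set of a trail. -/
def edgesOf [DecidableEq V] (vs : List V) : Finset (Sym2 V) :=
  (trailEdges vs).toFinset

/-- An alternating trail w.r.t. `M`: edges alternate between `M` and its complement. -/
def IsAlternating [DecidableEq V] (M : Finset (Sym2 V)) (vs : List V) : Prop :=
  IsTrail vs ∧ (trailEdges vs).Chain' (fun e f => e ∈ M ↔ f ∉ M)

/-- An augmenting trail for `M`: alternating, and `M ∆ P` is a triangle-free 2-matching
of size `|M| + 1`. -/
def IsAugmenting [Fintype V] [DecidableEq V] (G : SimpleGraph V) [DecidableRel G.Adj]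
    (M : Finset (Sym2 V)) (vs : List V) : Prop :=
  IsAlternating M vs ∧ IsTF2M G (M ∆ edgesOf vs) ∧ (M ∆ edgesOf vs).card = M.card + 1

/-- The first edge of the trail `vs` belongs to `S`. -/
def FirstEdgeIn [DecidableEq V] (vs : List V) (S : Finset (Sym2 V)) : Prop :=
  ∃ e ∈ S, (trailEdges vs).head? = some e

/-- The last edge of the trail `vs` belongs to `S`. -/
def LastEdgeIn [DecidableEq V] (vs : List V) (S : Finset (Sym2 V)) : Prop :=
  ∃ e ∈ S, (trailEdges vs).getLast? = some e

/-- `u` is deficient w.r.t. `E'`. -/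
def Deficient [Fintype V] [DecidableEq V] (APX OPT E' : Finset (Sym2 V)) (u : V) : Prop :=
  (nbrs (APX \ E') u).card < (nbrs (OPT \ E') u).card

/-- `a b c` form a triangle in the edge set `S`. -/
def TriIn [DecidableEq V] (S : Finset (Sym2 V)) (a b c : V) : Prop :=
  a ≠ b ∧ b ≠ c ∧ a ≠ c ∧ s(a, b) ∈ S ∧ s(b, c) ∈ S ∧ s(a, c) ∈ S

set_option linter.unusedSectionVars false

section AuxLemmas
variable [Fintype V] [DecidableEq V]

lemma mem_nbrs {S : Finset (Sym2 V)} {u v : V} : v ∈ nbrs S u ↔ s(u, v) ∈ S := by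
  simp [nbrs]

lemma nbrs_mono {S T : Finset (Sym2 V)} (h : S ⊆ T) (u : V) : nbrs S u ⊆ nbrs T u := by
  intro y hy; rw [mem_nbrs] at hy ⊢; exact h hy

lemma ne_of_mem_edge {G : SimpleGraph V} [DecidableRel G.Adj] {M : Finset (Sym2 V)}
    (hM : M ⊆ G.edgeFinset) {u v : V} (h : s(u, v) ∈ M) : u ≠ v := by
  have := hM h
  rw [SimpleGraph.mem_edgeFinset, SimpleGraph.mem_edgeSet] at this
  exact this.ne

lemma hasTriangle_mono {S T : Finset (Sym2 V)} (h : S ⊆ T) (hS : HasTriangle S) :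
    HasTriangle T := by
  obtain ⟨a, b, c, h1, h2, h3, e1, e2, e3⟩ := hS
  exact ⟨a, b, c, h1, h2, h3, h e1, h e2, h e3⟩

lemma tri_insert_aux {S : Finset (Sym2 V)} {u v a b c : V} (hbc : b ≠ c) (hac : a ≠ c)
    (h1 : s(a, b) = s(u, v)) (h2 : s(b, c) ∈ S) (h3 : s(a, c) ∈ S) :
    ∃ z, z ≠ u ∧ z ≠ v ∧ s(u, z) ∈ S ∧ s(v, z) ∈ S := by
  rw [Sym2.eq_iff] at h1
  rcases h1 with ⟨rfl, rfl⟩ | ⟨rfl, rfl⟩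
  · exact ⟨c, hac.symm ∘ Eq.symm ∘ Eq.symm, hbc.symm, h3, h2⟩
  · exact ⟨c, hbc.symm, hac.symm, h2, h3⟩

lemma tri_insert {S : Finset (Sym2 V)} {u v : V}
    (hS : ¬ HasTriangle S) (hT : HasTriangle (insert s(u, v) S)) :
    ∃ z, z ≠ u ∧ z ≠ v ∧ s(u, z) ∈ S ∧ s(v, z) ∈ S := by
  obtain ⟨a, b, c, hab, hbc, hac, h1, h2, h3⟩ := hT
  rw [Finset.mem_insert] at h1 h2 h3
  have ne12 : ¬ (s(a, b) = s(u, v) ∧ s(b, c) = s(u, v)) := by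
    rintro ⟨e1, e2⟩
    have h := e1.trans e2.symm
    rw [Sym2.eq_iff] at h
    rcases h with ⟨h1', h2'⟩ | ⟨h1', _⟩
    · exact hab h1'
    · exact hac h1'
  have ne13 : ¬ (s(a, b) = s(u, v) ∧ s(a, c) = s(u, v)) := by
    rintro ⟨e1, e2⟩
    have h := e1.trans e2.symm
    rw [Sym2.eq_iff] at h
    rcases h with ⟨_, h2'⟩ | ⟨h1', _⟩
    · exact hbc h2'
    · exact hac h1'
  have ne23 : ¬ (s(b, c) = s(u, v) ∧ s(a, c) = s(u, v)) := by
    rintro ⟨e1, e2⟩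
    have h := e1.trans e2.symm
    rw [Sym2.eq_iff] at h
    rcases h with ⟨h1', _⟩ | ⟨h1', _⟩
    · exact hab h1'.symm
    · exact hbc h1'
  rcases h1 with h1 | h1
  · rcases h2 with h2 | h2
    · exact absurd ⟨h1, h2⟩ ne12
    rcases h3 with h3 | h3
    · exact absurd ⟨h1, h3⟩ ne13
    exact tri_insert_aux hbc hac h1 h2 h3
  rcases h2 with h2 | h2
  · rcases h3 with h3 | h3
    · exact absurd ⟨h2, h3⟩ ne23
    -- triangle (b,c,a): edges s(b,c)=e, s(c,a), s(b,a)
    exact tri_insert_aux (c := a) hac.symm hab.symm h2 (Sym2.eq_swap ▸ h3) (Sym2.eq_swap ▸ h1)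
  rcases h3 with h3 | h3
  · -- s(a,c) = e, others in S: triangle (a,c,b): edges s(a,c)=e, s(c,b), s(a,b)
    exact tri_insert_aux (b := c) hbc.symm hab h3 (Sym2.eq_swap ▸ h2) h1
  · exact absurd ⟨a, b, c, hab, hbc, hac, h1, h2, h3⟩ hS

end AuxLemmas

section More
variable [Fintype V] [DecidableEq V]

lemma nbrs_insert_left {S : Finset (Sym2 V)} {u v : V} (huv : u ≠ v) :
    nbrs (insert s(u, v) S) u ⊆ insert v (nbrs S u) := by
  intro y hy
  rw [mem_nbrs, Finset.mem_insert] at hy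
  rcases hy with h | h
  · rw [Sym2.eq_iff] at h
    rcases h with ⟨_, rfl⟩ | ⟨h1, rfl⟩
    · exact Finset.mem_insert_self _ _
    · exact absurd h1 huv
  · exact Finset.mem_insert_of_mem (mem_nbrs.mpr h)

lemma nbrs_insert_right {S : Finset (Sym2 V)} {u v : V} (huv : u ≠ v) :
    nbrs (insert s(u, v) S) v ⊆ insert u (nbrs S v) := by
  intro y hy
  rw [mem_nbrs, Finset.mem_insert] at hy
  rcases hy with h | h
  · rw [Sym2.eq_iff] at h
    rcases h with ⟨h1, rfl⟩ | ⟨_, rfl⟩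
    · exact absurd h1.symm huv
    · exact Finset.mem_insert_self _ _
  · exact Finset.mem_insert_of_mem (mem_nbrs.mpr h)

lemma nbrs_insert_other {S : Finset (Sym2 V)} {u v x : V} (hxu : x ≠ u) (hxv : x ≠ v) :
    nbrs (insert s(u, v) S) x ⊆ nbrs S x := by
  intro y hy
  rw [mem_nbrs, Finset.mem_insert] at hy
  rcases hy with h | h
  · rw [Sym2.eq_iff] at h
    rcases h with ⟨h1, _⟩ | ⟨h1, _⟩
    · exact absurd h1 hxu
    · exact absurd h1 hxv
  · exact mem_nbrs.mpr h

lemma nbrs_insert_erase_right {S : Finset (Sym2 V)} {u v w : V} (huv : u ≠ v) :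
    nbrs (insert s(u, v) (S.erase s(v, w))) v ⊆ insert u ((nbrs S v).erase w) := by
  intro y hy
  rw [mem_nbrs, Finset.mem_insert] at hy
  rcases hy with h | h
  · rw [Sym2.eq_iff] at h
    rcases h with ⟨h1, rfl⟩ | ⟨_, rfl⟩
    · exact absurd h1.symm huv
    · exact Finset.mem_insert_self _ _
  · rw [Finset.mem_erase] at h
    refine Finset.mem_insert_of_mem (Finset.mem_erase.mpr ⟨?_, mem_nbrs.mpr h.2⟩)
    rintro rfl
    exact h.1 rfl

lemma main_step {G : SimpleGraph V} [DecidableRel G.Adj]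
    {A O : Finset (Sym2 V)} (hA : IsTF2M G A) (hO : IsTF2M G O)
    (hmax : ∀ M : Finset (Sym2 V), IsTF2M G M → M.card ≤ O.card)
    (hint : ∀ M : Finset (Sym2 V), IsTF2M G M → M.card = O.card →
      (A ∩ M).card ≤ (A ∩ O).card)
    {u v : V} (he : s(u, v) ∈ A) (heO : s(u, v) ∉ O) (hdu : (nbrs O u).card ≤ 1) :
    ∃ z, s(u, z) ∈ O ∧ s(u, z) ∉ A ∧ s(v, z) ∈ O ∧ s(v, z) ∈ A ∧ (nbrs O v).card = 2 := by
  have huv : u ≠ v := ne_of_mem_edge hA.1.1 he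
  -- generic swap contradiction
  have contra : ∀ f : Sym2 V, f ∈ O → f ∉ A →
      IsTF2M G (insert s(u, v) (O.erase f)) → False := by
    intro f hfO hfA hM
    have h1 : s(u, v) ∉ O.erase f := fun h => heO (Finset.erase_subset _ _ h)
    have h2 : 0 < O.card := Finset.card_pos.mpr ⟨f, hfO⟩
    have hcard : (insert s(u, v) (O.erase f)).card = O.card := by
      rw [Finset.card_insert_of_notMem h1, Finset.card_erase_of_mem hfO]
      omega
    have hAM : A ∩ insert s(u, v) (O.erase f) = insert s(u, v) (A ∩ O) := by
      rw [Finset.inter_insert_of_mem he, Finset.inter_erase,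
        Finset.erase_eq_of_notMem (fun h => hfA (Finset.mem_inter.mp h).1)]
    have hle := hint _ hM hcard
    rw [hAM, Finset.card_insert_of_notMem
      (fun h => heO (Finset.mem_inter.mp h).2)] at hle
    omega
  -- subset of edge set, for any f
  have hsub : ∀ f : Sym2 V, insert s(u, v) (O.erase f) ⊆ G.edgeFinset := by
    intro f x hx
    rcases Finset.mem_insert.mp hx with rfl | hx
    · exact hA.1.1 he
    · exact hO.1.1 (Finset.erase_subset _ _ hx)
  -- degree bound at u for any f
  have hdegu : ∀ f : Sym2 V, (nbrs (insert s(u, v) (O.erase f)) u).card ≤ 2 := by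
    intro f
    have hs : nbrs (insert s(u, v) (O.erase f)) u ⊆ insert v (nbrs O u) :=
      (nbrs_mono (Finset.insert_subset_insert _ (Finset.erase_subset _ _)) u).trans
        (nbrs_insert_left huv)
    calc (nbrs (insert s(u, v) (O.erase f)) u).card ≤ (insert v (nbrs O u)).card :=
          Finset.card_le_card hs
      _ ≤ (nbrs O u).card + 1 := Finset.card_insert_le _ _
      _ ≤ 2 := by omega
  have hdegother : ∀ (f : Sym2 V) (x : V), x ≠ u → x ≠ v →
      (nbrs (insert s(u, v) (O.erase f)) x).card ≤ 2 := by
    intro f x hxu hxv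
    have hs : nbrs (insert s(u, v) (O.erase f)) x ⊆ nbrs O x :=
      ((nbrs_mono (Finset.insert_subset_insert _ (Finset.erase_subset _ _)) x).trans
        (nbrs_insert_other hxu hxv))
    exact le_trans (Finset.card_le_card hs) (hO.1.2 x)
  by_cases hv : (nbrs O v).card ≤ 1
  · -- Case A
    exfalso
    by_cases hT : HasTriangle (insert s(u, v) O)
    · obtain ⟨z, hzu, hzv, hg1, hg2⟩ := tri_insert hO.2 hT
      by_cases hg2A : s(v, z) ∈ A
      · -- then s(u,z) ∉ A else triangle in A; remove s(u,z)
        have hg1A : s(u, z) ∉ A := by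
          intro hg1A
          exact hA.2 ⟨u, v, z, huv, hzv.symm, hzu.symm, he, hg2A, hg1A⟩
        refine contra s(u, z) hg1 hg1A ⟨⟨hsub _, ?_⟩, ?_⟩
        · intro x
          by_cases hxu : x = u
          · rw [hxu]; exact hdegu _
          by_cases hxv : x = v
          · rw [hxv]
            have hs : nbrs (insert s(u, v) (O.erase s(u, z))) v ⊆ insert u (nbrs O v) :=
              (nbrs_mono (Finset.insert_subset_insert _ (Finset.erase_subset _ _)) v).trans
                (nbrs_insert_right huv)
            calc (nbrs (insert s(u, v) (O.erase s(u, z))) v).card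
                ≤ (insert u (nbrs O v)).card := Finset.card_le_card hs
              _ ≤ (nbrs O v).card + 1 := Finset.card_insert_le _ _
              _ ≤ 2 := by omega
          · exact hdegother _ x hxu hxv
        · intro hT'
          have hnt : ¬ HasTriangle (O.erase s(u, z)) :=
            fun h => hO.2 (hasTriangle_mono (Finset.erase_subset _ _) h)
          obtain ⟨z', _, _, hz1, _⟩ := tri_insert hnt hT'
          have hz1O : s(u, z') ∈ O := Finset.erase_subset _ _ hz1
          have : z' = z := Finset.card_le_one.mp hdu z' (mem_nbrs.mpr hz1O) z (mem_nbrs.mpr hg1)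
          subst this
          exact (Finset.mem_erase.mp hz1).1 rfl
      · -- remove s(v,z)
        refine contra s(v, z) hg2 hg2A ⟨⟨hsub _, ?_⟩, ?_⟩
        · intro x
          by_cases hxu : x = u
          · rw [hxu]; exact hdegu _
          by_cases hxv : x = v
          · rw [hxv]
            have hs : nbrs (insert s(u, v) (O.erase s(v, z))) v ⊆ insert u (nbrs O v) :=
              (nbrs_mono (Finset.insert_subset_insert _ (Finset.erase_subset _ _)) v).trans
                (nbrs_insert_right huv)
            calc (nbrs (insert s(u, v) (O.erase s(v, z))) v).card
                ≤ (insert u (nbrs O v)).card := Finset.card_le_card hs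
              _ ≤ (nbrs O v).card + 1 := Finset.card_insert_le _ _
              _ ≤ 2 := by omega
          · exact hdegother _ x hxu hxv
        · intro hT'
          have hnt : ¬ HasTriangle (O.erase s(v, z)) :=
            fun h => hO.2 (hasTriangle_mono (Finset.erase_subset _ _) h)
          obtain ⟨z', _, _, hz1, hz2⟩ := tri_insert hnt hT'
          have hz1O : s(u, z') ∈ O := Finset.erase_subset _ _ hz1
          have : z' = z := Finset.card_le_one.mp hdu z' (mem_nbrs.mpr hz1O) z (mem_nbrs.mpr hg1)
          subst this
          exact (Finset.mem_erase.mp hz2).1 rfl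
    · -- no triangle: augment
      have hM : IsTF2M G (insert s(u, v) O) := by
        refine ⟨⟨?_, ?_⟩, hT⟩
        · intro x hx
          rcases Finset.mem_insert.mp hx with rfl | hx
          · exact hA.1.1 he
          · exact hO.1.1 hx
        · intro x
          by_cases hxu : x = u
          · rw [hxu]
            calc (nbrs (insert s(u, v) O) u).card ≤ (insert v (nbrs O u)).card :=
                  Finset.card_le_card (nbrs_insert_left huv)
              _ ≤ (nbrs O u).card + 1 := Finset.card_insert_le _ _
              _ ≤ 2 := by omega
          by_cases hxv : x = v
          · rw [hxv]
            calc (nbrs (insert s(u, v) O) v).card ≤ (insert u (nbrs O v)).card :=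
                  Finset.card_le_card (nbrs_insert_right huv)
              _ ≤ (nbrs O v).card + 1 := Finset.card_insert_le _ _
              _ ≤ 2 := by omega
          · exact le_trans (Finset.card_le_card (nbrs_insert_other hxu hxv)) (hO.1.2 x)
      have := hmax _ hM
      rw [Finset.card_insert_of_notMem heO] at this
      omega
  · -- Case B : degree of v in O equals 2
    have hv2 : (nbrs O v).card = 2 := le_antisymm (hO.1.2 v) (by omega)
    obtain ⟨w1, w2, hw12, hw⟩ := Finset.card_eq_two.mp hv2
    have hw1O : s(v, w1) ∈ O := mem_nbrs.mp (by rw [hw]; exact Finset.mem_insert_self _ _)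
    have hw2O : s(v, w2) ∈ O := mem_nbrs.mp (by
      rw [hw]; exact Finset.mem_insert_of_mem (Finset.mem_singleton_self _))
    have hw1u : w1 ≠ u := by
      rintro rfl; exact heO (by rw [Sym2.eq_swap]; exact hw1O)
    have hw2u : w2 ≠ u := by
      rintro rfl; exact heO (by rw [Sym2.eq_swap]; exact hw2O)
    have hvw1 : v ≠ w1 := ne_of_mem_edge hO.1.1 hw1O
    have hvw2 : v ≠ w2 := ne_of_mem_edge hO.1.1 hw2O
    -- not both f1, f2 in A
    have hnotboth : ¬ (s(v, w1) ∈ A ∧ s(v, w2) ∈ A) := by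
      rintro ⟨ha1, ha2⟩
      have h3 : 2 < (nbrs A v).card := by
        rw [Finset.two_lt_card]
        exact ⟨u, mem_nbrs.mpr (by rw [Sym2.eq_swap]; exact he),
          w1, mem_nbrs.mpr ha1, w2, mem_nbrs.mpr ha2, hw1u.symm, hw2u.symm, hw12⟩
      have := hA.1.2 v
      omega
    -- good swap at v: remove s(v,w) provided u's O-neighbourhood avoids the other one
    have swapB : ∀ w w' : V, nbrs O v = {w, w'} → s(v, w) ∈ O → s(v, w) ∉ A →
        (∀ z, s(u, z) ∈ O → z ≠ w') → False := by
      intro w w' hww' hwO hwA hz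
      refine contra s(v, w) hwO hwA ⟨⟨hsub _, ?_⟩, ?_⟩
      · intro x
        by_cases hxu : x = u
        · rw [hxu]; exact hdegu _
        by_cases hxv : x = v
        · rw [hxv]
          have hwmem : w ∈ nbrs O v := mem_nbrs.mpr hwO
          calc (nbrs (insert s(u, v) (O.erase s(v, w))) v).card
              ≤ (insert u ((nbrs O v).erase w)).card :=
                Finset.card_le_card (nbrs_insert_erase_right huv)
            _ ≤ ((nbrs O v).erase w).card + 1 := Finset.card_insert_le _ _
            _ = (nbrs O v).card - 1 + 1 := by rw [Finset.card_erase_of_mem hwmem]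
            _ ≤ 2 := by omega
        · exact hdegother _ x hxu hxv
      · intro hT'
        have hnt : ¬ HasTriangle (O.erase s(v, w)) :=
          fun h => hO.2 (hasTriangle_mono (Finset.erase_subset _ _) h)
        obtain ⟨z', _, _, hz1, hz2⟩ := tri_insert hnt hT'
        have hz1O : s(u, z') ∈ O := Finset.erase_subset _ _ hz1
        have hz2O : s(v, z') ∈ O := Finset.erase_subset _ _ hz2
        have hz'mem : z' ∈ ({w, w'} : Finset V) := by rw [← hww']; exact mem_nbrs.mpr hz2O
        rcases Finset.mem_insert.mp hz'mem with rfl | hz'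
        · exact (Finset.mem_erase.mp hz2).1 rfl
        · exact hz z' hz1O (Finset.mem_singleton.mp hz')
    by_cases h1A : s(v, w1) ∈ A
    · have h2A : s(v, w2) ∉ A := fun h => hnotboth ⟨h1A, h⟩
      by_cases hz1 : s(u, w1) ∈ O
      · -- residual case with z = w1
        have hg1A : s(u, w1) ∉ A := by
          intro hg1A
          exact hA.2 ⟨u, v, w1, huv, hvw1, hw1u.symm, he, h1A, hg1A⟩
        exact ⟨w1, hz1, hg1A, hw1O, h1A, hv2⟩
      · exact absurd (swapB w2 w1 (by rw [hw, Finset.pair_comm]) hw2O h2A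
          (fun z hzO => fun h => hz1 (h ▸ hzO))) id
    · -- s(v,w1) ∉ A
      by_cases hz2 : s(u, w2) ∈ O
      · by_cases hz1 : s(u, w1) ∈ O
        · -- u has two O-neighbours, contradiction with hdu
          exfalso
          have h2 : 1 < (nbrs O u).card := by
            rw [Finset.one_lt_card]
            exact ⟨w1, mem_nbrs.mpr hz1, w2, mem_nbrs.mpr hz2, hw12⟩
          omega
        · by_cases h2A : s(v, w2) ∈ A
          · -- residual with z = w2
            have hg1A : s(u, w2) ∉ A := by
              intro hg1A
              exact hA.2 ⟨u, v, w2, huv, hvw2, hw2u.symm, he, h2A, hg1A⟩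
            exact ⟨w2, hz2, hg1A, hw2O, h2A, hv2⟩
          · exact absurd (swapB w2 w1 (by rw [hw, Finset.pair_comm]) hw2O h2A
              (fun z hzO => fun h => hz1 (h ▸ hzO))) id
      · exact absurd (swapB w1 w2 hw hw1O h1A
          (fun z hzO => fun h => hz2 (h ▸ hzO))) id

end More

theorem stmt_1 [Fintype V] [DecidableEq V] (G : SimpleGraph V) [DecidableRel G.Adj]
    (APX OPT : Finset (Sym2 V))
    (hAPX : IsTF2M G APX) (hOPT : IsTF2M G OPT)
    (hmax : ∀ M : Finset (Sym2 V), IsTF2M G M → M.card ≤ OPT.card)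
    (hint : ∀ M : Finset (Sym2 V), IsTF2M G M → M.card = OPT.card →
      (APX ∩ M).card ≤ (APX ∩ OPT).card) :
    ∀ u : V, (nbrs APX u).card ≤ (nbrs OPT u).card := by
  intro u
  by_contra hlt'
  push_neg at hlt'
  have hAu2 : (nbrs APX u).card ≤ 2 := hAPX.1.2 u
  have hdu : (nbrs OPT u).card ≤ 1 := by omega
  have hex : ∃ v ∈ nbrs APX u, v ∉ nbrs OPT u := by
    by_contra h
    push_neg at h
    have := Finset.card_le_card h
    omega
  obtain ⟨v, hvA, hvO⟩ := hex
  have heA : s(u, v) ∈ APX := mem_nbrs.mp hvA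
  have heO : s(u, v) ∉ OPT := fun h => hvO (mem_nbrs.mpr h)
  obtain ⟨z, hz1, hz2, hz3, _, _⟩ := main_step hAPX hOPT hmax hint heA heO hdu
  have hzmem : z ∈ nbrs OPT u := mem_nbrs.mpr hz1
  have hOu1 : (nbrs OPT u).card = 1 := le_antisymm hdu (Finset.card_pos.mpr ⟨z, hzmem⟩)
  have hOeq : nbrs OPT u = {z} := by
    obtain ⟨c, hc⟩ := Finset.card_eq_one.mp hOu1
    rw [hc] at hzmem ⊢
    rw [Finset.mem_singleton] at hzmem
    rw [hzmem]
  have hAu : (nbrs APX u).card = 2 := by omega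
  obtain ⟨a, b, hab, habs⟩ := Finset.card_eq_two.mp hAu
  have hv' : v ∈ ({a, b} : Finset V) := habs ▸ hvA
  obtain ⟨t, htmem, htv⟩ : ∃ t ∈ nbrs APX u, t ≠ v := by
    have hamem : a ∈ nbrs APX u := habs ▸ Finset.mem_insert_self a {b}
    have hbmem : b ∈ nbrs APX u := habs ▸ Finset.mem_insert_of_mem (Finset.mem_singleton_self b)
    rcases Finset.mem_insert.mp hv' with h | h
    · exact ⟨b, hbmem, fun hh => hab (hh.trans h).symm⟩
    · exact ⟨a, hamem, fun hh => hab (hh.trans (Finset.mem_singleton.mp h))⟩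
  have htA : s(u, t) ∈ APX := mem_nbrs.mp htmem
  have htz : t ≠ z := by rintro rfl; exact hz2 htA
  have htO : s(u, t) ∉ OPT := by
    intro h
    have hm : t ∈ nbrs OPT u := mem_nbrs.mpr h
    rw [hOeq, Finset.mem_singleton] at hm
    exact htz hm
  obtain ⟨z2, hz1', _, hz3', _, _⟩ := main_step hAPX hOPT hmax hint htA htO hdu
  have hzz : z2 = z := by
    have hm : z2 ∈ nbrs OPT u := mem_nbrs.mpr hz1'
    rw [hOeq, Finset.mem_singleton] at hm
    exact hm
  rw [hzz] at hz3'
  have h3 : 2 < (nbrs OPT z).card := by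
    rw [Finset.two_lt_card]
    exact ⟨u, mem_nbrs.mpr (by rw [Sym2.eq_swap]; exact hz1),
      v, mem_nbrs.mpr (by rw [Sym2.eq_swap]; exact hz3),
      t, mem_nbrs.mpr (by rw [Sym2.eq_swap]; exact hz3'),
      ne_of_mem_edge hAPX.1.1 heA, ne_of_mem_edge hAPX.1.1 htA,
      fun h => htv h.symm⟩
  have := hOPT.1.2 z
  omega
end

section
/- Let APX be a triangle-free 2-matching of G, OPT a maximum triangle-free 2-matching maximizing |APX ∩ OPT|, u a vertex with |N_APX(u)| > |N_OPT(u)|, and uv ∈ APX \ OPT an edge such that uvw is the unique triangle in OPT ∪ {uv}. Then the edge vw belongs to APX ∩ OPT. -/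
open Finset symmDiff

variable {V : Type*}

theorem stmt_3 [Fintype V] [DecidableEq V] (G : SimpleGraph V) [DecidableRel G.Adj]
    (APX OPT : Finset (Sym2 V))
    (hAPX : IsTF2M G APX) (hOPT : IsTF2M G OPT)
    (hmax : ∀ M : Finset (Sym2 V), IsTF2M G M → M.card ≤ OPT.card)
    (hint : ∀ M : Finset (Sym2 V), IsTF2M G M → M.card = OPT.card →
      (APX ∩ M).card ≤ (APX ∩ OPT).card)
    (u v w : V) (hu : (nbrs OPT u).card < (nbrs APX u).card)
    (huv : s(u, v) ∈ APX \ OPT)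
    (htri : TriIn (insert (s(u, v)) OPT) u v w)
    (huniq : ∀ a b c : V, TriIn (insert (s(u, v)) OPT) a b c →
      ({a, b, c} : Finset V) = {u, v, w}) :
    s(v, w) ∈ APX ∩ OPT := by
  obtain ⟨huvne, hvwne, huwne, huvmem, hvwmem, huwmem⟩ := htri
  have huvAPX : s(u, v) ∈ APX := (Finset.mem_sdiff.mp huv).1
  have huvOPT : s(u, v) ∉ OPT := (Finset.mem_sdiff.mp huv).2
  have hvwOPT : s(v, w) ∈ OPT := by
    rcases Finset.mem_insert.mp hvwmem with h | h
    · rcases Sym2.eq_iff.mp h with ⟨h1, h2⟩ | ⟨h1, h2⟩ <;> simp_all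
    · exact h
  by_contra hcon
  have hvwAPX : s(v, w) ∉ APX := fun h => hcon (Finset.mem_inter.mpr ⟨h, hvwOPT⟩)
  set M' := (insert (s(u, v)) OPT).erase (s(v, w)) with hM'
  -- degree of u in OPT is at most 1
  have hdegu : (nbrs OPT u).card ≤ 1 := by
    have := hAPX.1.2 u; omega
  have hnbr : ∀ (S : Finset (Sym2 V)) (x y : V), y ∈ nbrs S x ↔ s(x, y) ∈ S := by
    intro S x y; simp [nbrs]
  -- M' is a TF2M
  have hM'sub : M' ⊆ G.edgeFinset := by
    intro e he
    rcases Finset.mem_insert.mp (Finset.mem_erase.mp he).2 with rfl | h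
    · exact hAPX.1.1 huvAPX
    · exact hOPT.1.1 h
  have hM'deg : ∀ x : V, (nbrs M' x).card ≤ 2 := by
    intro x
    by_cases hxu : x = u
    · subst hxu
      have hsub : nbrs M' x ⊆ insert v (nbrs OPT x) := by
        intro y hy
        rw [hnbr] at hy
        rcases Finset.mem_insert.mp (Finset.mem_erase.mp hy).2 with h | h
        · rcases Sym2.eq_iff.mp h with ⟨h1, h2⟩ | ⟨h1, h2⟩
          · exact Finset.mem_insert.mpr (Or.inl h2)
          · exact absurd h1 huvne
        · exact Finset.mem_insert.mpr (Or.inr ((hnbr _ _ _).mpr h))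
      calc (nbrs M' x).card ≤ (insert v (nbrs OPT x)).card := Finset.card_le_card hsub
        _ ≤ (nbrs OPT x).card + 1 := Finset.card_insert_le _ _
        _ ≤ 2 := by omega
    · by_cases hxv : x = v
      · subst hxv
        have hsub : nbrs M' x ⊆ insert u ((nbrs OPT x).erase w) := by
          intro y hy
          rw [hnbr] at hy
          obtain ⟨hne, hmem⟩ := Finset.mem_erase.mp hy
          have hyw : y ≠ w := by
            intro h; subst h; exact hne rfl
          rcases Finset.mem_insert.mp hmem with h | h
          · rcases Sym2.eq_iff.mp h with ⟨h1, h2⟩ | ⟨h1, h2⟩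
            · exact absurd h1 (Ne.symm huvne)
            · exact Finset.mem_insert.mpr (Or.inl h2)
          · exact Finset.mem_insert.mpr (Or.inr (Finset.mem_erase.mpr
              ⟨hyw, (hnbr _ _ _).mpr h⟩))
        have hwmem : w ∈ nbrs OPT x := (hnbr _ _ _).mpr hvwOPT
        have hd := hOPT.1.2 x
        calc (nbrs M' x).card ≤ (insert u ((nbrs OPT x).erase w)).card :=
              Finset.card_le_card hsub
          _ ≤ ((nbrs OPT x).erase w).card + 1 := Finset.card_insert_le _ _
          _ = ((nbrs OPT x).card - 1) + 1 := by rw [Finset.card_erase_of_mem hwmem]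
          _ ≤ 2 := by
              have : 1 ≤ (nbrs OPT x).card := Finset.card_pos.mpr ⟨w, hwmem⟩
              omega
      · have hsub : nbrs M' x ⊆ nbrs OPT x := by
          intro y hy
          rw [hnbr] at hy
          rcases Finset.mem_insert.mp (Finset.mem_erase.mp hy).2 with h | h
          · rcases Sym2.eq_iff.mp h with ⟨h1, h2⟩ | ⟨h1, h2⟩
            · exact absurd h1 hxu
            · exact absurd h1 hxv
          · exact (hnbr _ _ _).mpr h
        exact le_trans (Finset.card_le_card hsub) (hOPT.1.2 x)
  have hM'tf : ¬ HasTriangle M' := by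
    rintro ⟨a, b, c, hab, hbc, hac, e1, e2, e3⟩
    have hins : ∀ e ∈ M', e ∈ insert (s(u, v)) OPT := fun e he =>
      (Finset.mem_erase.mp he).2
    have hset := huniq a b c ⟨hab, hbc, hac, hins _ e1, hins _ e2, hins _ e3⟩
    have hvwM' : s(v, w) ∉ M' := Finset.notMem_erase _ _
    apply hvwM'
    have hv : v ∈ ({a, b, c} : Finset V) := by rw [hset]; simp
    have hw : w ∈ ({a, b, c} : Finset V) := by rw [hset]; simp
    simp only [Finset.mem_insert, Finset.mem_singleton] at hv hw
    rcases hv with rfl | rfl | rfl <;> rcases hw with rfl | rfl | rfl <;>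
      first
        | exact absurd rfl hvwne
        | exact e1
        | exact e2
        | exact e3
        | (rw [Sym2.eq_swap]; first | exact e1 | exact e2 | exact e3)
  have hM'card : M'.card = OPT.card := by
    rw [hM', Finset.card_erase_of_mem (Finset.mem_insert.mpr (Or.inr hvwOPT)),
      Finset.card_insert_of_notMem huvOPT]
    omega
  have hle := hint M' ⟨⟨hM'sub, hM'deg⟩, hM'tf⟩ hM'card
  have key : APX ∩ M' = insert (s(u, v)) (APX ∩ OPT) := by
    ext e
    simp only [Finset.mem_inter, hM', Finset.mem_erase, Finset.mem_insert]
    constructor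
    · rintro ⟨heA, hne, (rfl | hO)⟩
      · exact Or.inl rfl
      · exact Or.inr ⟨heA, hO⟩
    · rintro (rfl | ⟨heA, hO⟩)
      · refine ⟨huvAPX, ?_, Or.inl rfl⟩
        intro h
        rcases Sym2.eq_iff.mp h with ⟨h1, h2⟩ | ⟨h1, h2⟩
        · exact huvne h1
        · exact huwne h1
      · exact ⟨heA, fun h => hvwAPX (h ▸ heA), Or.inr hO⟩
  have huvint : s(u, v) ∉ APX ∩ OPT := fun h => huvOPT (Finset.mem_inter.mp h).2
  rw [key, Finset.card_insert_of_notMem huvint] at hle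
  omega
end

section
/- Let APX be a triangle-free 2-matching and OPT a triangle-free 2-matching of G with |N_APX(u)| ≤ |N_OPT(u)| for all u. Let P_1,...,P_{k-1} be edge-disjoint alternating trails in APX △ OPT (each alternating between OPT\APX edges and APX\OPT edges, starting and ending with OPT\APX edges). Then for every vertex w: |N_{OPT △ P}(w)| ≤ |N_OPT(w)|, where P is the union of the edge sets of P_1,...,P_{k-1}. -/
open Finset symmDiff

variable {V : Type*}

lemma nbrs_card [Fintype V] [DecidableEq V] (S : Finset (Sym2 V)) (w : V) :
    (nbrs S w).card = (S.filter (fun e => w ∈ e)).card := by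
  apply Finset.card_bij (fun v _ => s(w, v))
  · intro v hv
    simp only [nbrs, Finset.mem_filter, Finset.mem_univ, true_and] at hv ⊢
    exact ⟨hv, Sym2.mem_mk_left w v⟩
  · intro a _ b _ h
    exact Sym2.congr_right.mp h
  · intro e he
    simp only [Finset.mem_filter] at he
    obtain ⟨v, rfl⟩ := Sym2.mem_iff_exists.mp he.2
    exact ⟨v, by simp [nbrs, he.1], rfl⟩

lemma trailEdges_cons_cons (a b : V) (l : List V) :
    trailEdges (a :: b :: l) = s(a, b) :: trailEdges (b :: l) := rfl

lemma trail_key_aux [DecidableEq V] (M : Finset (Sym2 V)) (w : V) :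
    ∀ (n : ℕ) (vs : List V), vs.length ≤ n → 2 ≤ vs.length →
    vs.Chain' (· ≠ ·) → (trailEdges vs).Nodup →
    (trailEdges vs).Chain' (fun e f => e ∈ M ↔ f ∉ M) →
    (∀ e ∈ (trailEdges vs).head?, e ∉ M) →
    (∀ e ∈ (trailEdges vs).getLast?, e ∉ M) →
    (trailEdges vs).countP (fun e => decide (e ∈ M ∧ w ∈ e))
        + (if vs.head? = some w then 1 else 0)
      ≤ (trailEdges vs).countP (fun e => decide (e ∉ M ∧ w ∈ e)) := by
  intro n
  induction n with
  | zero => intro vs h h2; omega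
  | succ n ih =>
    intro vs hlen h2 hc hnd halt hh hl
    match vs with
    | a :: b :: l =>
      have he0 : s(a, b) ∉ M := hh _ (by simp [trailEdges_cons_cons])
      match l with
      | [] =>
        simp only [trailEdges, List.zipWith, List.tail_cons, List.countP_cons,
          List.countP_nil, List.head?_cons]
        by_cases hwa : a = w
        · subst hwa
          simp [he0, Sym2.mem_mk_left]
        · simp [he0, Option.some_inj, hwa]
      | c :: l' =>
        have halt1 : (s(a,b) ∈ M ↔ s(b,c) ∉ M) := by
          rw [trailEdges_cons_cons, trailEdges_cons_cons] at halt
          exact (List.isChain_cons_cons.mp halt).1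
        have he1 : s(b, c) ∈ M := by
          by_contra h
          exact he0 (halt1.mpr h)
        have hbc : b ≠ c := (List.isChain_cons_cons.mp (List.isChain_cons_cons.mp hc).2).1
        have hab : a ≠ b := (List.isChain_cons_cons.mp hc).1
        have hac : a ≠ c := by
          rintro rfl
          rw [trailEdges_cons_cons, trailEdges_cons_cons] at hnd
          exact (List.nodup_cons.mp hnd).1
            (by rw [Sym2.eq_swap]; exact List.mem_cons_self)
        match l' with
        | [] =>
          -- two edges, last edge is s(b,c) ∈ M, contradiction with hl
          exfalso
          apply hl s(b, c) _ |>.elim he1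
          · simp [trailEdges]
        | d :: l'' =>
          have key := ih (c :: d :: l'') (by simp at hlen ⊢; omega) (by simp)
            (hc.tail.tail)
            (by rw [trailEdges_cons_cons, trailEdges_cons_cons] at hnd; exact hnd.of_cons.of_cons)
            (by rw [trailEdges_cons_cons, trailEdges_cons_cons] at halt
                exact (List.isChain_cons_cons.mp (List.isChain_cons_cons.mp halt).2).2)
            (by intro e he
                rw [trailEdges_cons_cons] at he
                simp only [List.head?, Option.mem_def, Option.some_inj] at he
                subst he
                have halt2 : (s(b,c) ∈ M ↔ s(c,d) ∉ M) := by
                  rw [trailEdges_cons_cons, trailEdges_cons_cons, trailEdges_cons_cons] at halt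
                  exact (List.isChain_cons_cons.mp (List.isChain_cons_cons.mp halt).2).1
                exact halt2.mp he1)
            (by intro e he
                apply hl
                rw [trailEdges_cons_cons, trailEdges_cons_cons (b := c), trailEdges_cons_cons] at *
                rw [List.getLast?_cons_cons, List.getLast?_cons_cons]
                exact he)
          clear ih hlen h2 hc hnd halt hh hl halt1
          rw [trailEdges_cons_cons, trailEdges_cons_cons]
          rw [List.countP_cons, List.countP_cons, List.countP_cons, List.countP_cons]
          simp only [List.head?_cons, Option.some_inj] at key ⊢
          have e0M : decide (s(a,b) ∈ M ∧ w ∈ s(a,b)) = false := by simp [he0]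
          have e1N : decide (s(b,c) ∉ M ∧ w ∈ s(b,c)) = false := by simp [he1]
          have e1M : decide (s(b,c) ∈ M ∧ w ∈ s(b,c)) = decide (w = b ∨ w = c) := by
            simp [he1, Sym2.mem_iff]
          have e0N : decide (s(a,b) ∉ M ∧ w ∈ s(a,b)) = decide (w = a ∨ w = b) := by
            simp [he0, Sym2.mem_iff]
          rw [e0M, e1N, e1M, e0N]
          have ha' : (if a = w then (1:ℕ) else 0) = (if w = a then 1 else 0) := by
            simp [eq_comm]
          have hc' : (if c = w then (1:ℕ) else 0) = (if w = c then 1 else 0) := by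
            simp [eq_comm]
          rw [ha']
          rw [hc'] at key
          have K1 : (if decide (w = b ∨ w = c) = true then (1:ℕ) else 0)
                + (if w = a then 1 else 0)
              ≤ (if decide (w = a ∨ w = b) = true then 1 else 0)
                + (if w = c then 1 else 0) := by
            by_cases hwa : w = a <;> by_cases hwb : w = b <;> by_cases hwc : w = c <;>
              simp [hwa, hwb, hwc, hab, hbc, hac, Ne.symm hab, Ne.symm hbc, Ne.symm hac]
          omega

lemma trail_key [DecidableEq V] (M : Finset (Sym2 V)) (w : V) (vs : List V)
    (h2 : 2 ≤ vs.length) (hc : vs.Chain' (· ≠ ·)) (hnd : (trailEdges vs).Nodup)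
    (halt : (trailEdges vs).Chain' (fun e f => e ∈ M ↔ f ∉ M))
    (hh : ∀ e ∈ (trailEdges vs).head?, e ∉ M)
    (hl : ∀ e ∈ (trailEdges vs).getLast?, e ∉ M) :
    (trailEdges vs).countP (fun e => decide (e ∈ M ∧ w ∈ e))
      ≤ (trailEdges vs).countP (fun e => decide (e ∉ M ∧ w ∈ e)) := by
  have := trail_key_aux M w vs.length vs le_rfl h2 hc hnd halt hh hl
  omega

lemma card_filter_toFinset [DecidableEq V] (l : List (Sym2 V)) (hnd : l.Nodup)
    (p : Sym2 V → Prop) [DecidablePred p] :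
    (l.toFinset.filter p).card = l.countP (fun e => decide (p e)) := by
  have h1 : l.toFinset.filter p = (l.filter (fun e => decide (p e))).toFinset := by
    rw [List.toFinset_filter]
    apply Finset.filter_congr
    intro x _
    simp
  rw [h1, List.toFinset_card_of_nodup (hnd.filter _), ← List.countP_eq_length_filter]

theorem stmt_4 [Fintype V] [DecidableEq V] (G : SimpleGraph V) [DecidableRel G.Adj]
    (APX OPT : Finset (Sym2 V))
    (hAPX : IsTF2M G APX) (hOPT : IsTF2M G OPT)
    (hdom : ∀ u : V, (nbrs APX u).card ≤ (nbrs OPT u).card)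
    (k : ℕ) (p : Fin k → List V)
    (halt : ∀ i, IsAlternating APX (p i))
    (hsub : ∀ i, edgesOf (p i) ⊆ APX ∆ OPT)
    (hfirst : ∀ i, FirstEdgeIn (p i) (OPT \ APX))
    (hlast : ∀ i, LastEdgeIn (p i) (OPT \ APX))
    (hdisj : ∀ i j, i ≠ j → Disjoint (edgesOf (p i)) (edgesOf (p j))) :
    ∀ w : V,
      (nbrs (OPT ∆ Finset.univ.biUnion fun i => edgesOf (p i)) w).card
        ≤ (nbrs OPT w).card := by
  
  intro w
  classical
  set P := Finset.univ.biUnion (fun i => edgesOf (p i)) with hP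
  rw [nbrs_card, nbrs_card]
  have hA : ((OPT ∆ P).filter (fun e => w ∈ e)).card
      ≤ ((OPT \ P).filter (fun e => w ∈ e)).card
        + ((P \ OPT).filter (fun e => w ∈ e)).card := by
    refine le_trans (Finset.card_le_card ?_) (Finset.card_union_le _ _)
    intro e he
    simp only [Finset.mem_filter, Finset.mem_union, Finset.mem_sdiff,
      Finset.mem_symmDiff] at he ⊢
    tauto
  have hB : ((OPT \ P).filter (fun e => w ∈ e)).card
      + ((OPT ∩ P).filter (fun e => w ∈ e)).card
      ≤ (OPT.filter (fun e => w ∈ e)).card := by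
    rw [← Finset.card_union_of_disjoint (by
      rw [Finset.disjoint_left]
      intro e he1 he2
      simp only [Finset.mem_filter, Finset.mem_sdiff, Finset.mem_inter] at he1 he2
      exact he1.1.2 he2.1.2)]
    apply Finset.card_le_card
    intro e he
    simp only [Finset.mem_filter, Finset.mem_union, Finset.mem_sdiff,
      Finset.mem_inter] at he ⊢
    tauto
  have per : ∀ i, ((edgesOf (p i) \ OPT).filter (fun e => w ∈ e)).card
      ≤ ((OPT ∩ edgesOf (p i)).filter (fun e => w ∈ e)).card := by
    intro i
    obtain ⟨⟨h2i, hci, hndi⟩, haltc⟩ := halt i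
    have hh : ∀ e ∈ (trailEdges (p i)).head?, e ∉ APX := by
      obtain ⟨e, heOA, hhead⟩ := hfirst i
      intro f hf
      rw [hhead, Option.mem_def, Option.some_inj] at hf
      subst hf
      exact (Finset.mem_sdiff.mp heOA).2
    have hl : ∀ e ∈ (trailEdges (p i)).getLast?, e ∉ APX := by
      obtain ⟨e, heOA, hlast'⟩ := hlast i
      intro f hf
      rw [hlast', Option.mem_def, Option.some_inj] at hf
      subst hf
      exact (Finset.mem_sdiff.mp heOA).2
    have hmem : ∀ e ∈ trailEdges (p i), (e ∈ APX ↔ e ∉ OPT) := by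
      intro e he
      have h := hsub i (by simp only [edgesOf, List.mem_toFinset]; exact he)
      rw [Finset.mem_symmDiff] at h
      constructor
      · intro hA' hO; rcases h with ⟨_, h2⟩ | ⟨_, h2⟩ <;> [exact h2 hO; exact h2 hA']
      · intro hO; rcases h with ⟨h1, _⟩ | ⟨h1, _⟩ <;> [exact h1; exact absurd h1 hO]
    have e1 : (edgesOf (p i) \ OPT).filter (fun e => w ∈ e)
        = (trailEdges (p i)).toFinset.filter (fun e => e ∉ OPT ∧ w ∈ e) := by
      ext e
      simp only [Finset.mem_filter, Finset.mem_sdiff, edgesOf]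
      tauto
    have e2 : (OPT ∩ edgesOf (p i)).filter (fun e => w ∈ e)
        = (trailEdges (p i)).toFinset.filter (fun e => e ∈ OPT ∧ w ∈ e) := by
      ext e
      simp only [Finset.mem_filter, Finset.mem_inter, edgesOf]
      tauto
    rw [e1, e2, card_filter_toFinset _ hndi, card_filter_toFinset _ hndi]
    calc (trailEdges (p i)).countP (fun e => decide (e ∉ OPT ∧ w ∈ e))
        ≤ (trailEdges (p i)).countP (fun e => decide (e ∈ APX ∧ w ∈ e)) := by
          apply List.countP_mono_left
          intro e he
          simp only [decide_eq_true_eq]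
          intro ⟨h1, h2⟩
          exact ⟨(hmem e he).mpr h1, h2⟩
      _ ≤ (trailEdges (p i)).countP (fun e => decide (e ∉ APX ∧ w ∈ e)) :=
          trail_key APX w (p i) h2i hci hndi haltc hh hl
      _ ≤ (trailEdges (p i)).countP (fun e => decide (e ∈ OPT ∧ w ∈ e)) := by
          apply List.countP_mono_left
          intro e he
          simp only [decide_eq_true_eq]
          intro ⟨h1, h2⟩
          refine ⟨?_, h2⟩
          by_contra hO
          exact h1 ((hmem e he).mpr hO)
  have hC : ((P \ OPT).filter (fun e => w ∈ e)).card
      ≤ ((OPT ∩ P).filter (fun e => w ∈ e)).card := by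
    have h1 : (P \ OPT).filter (fun e => w ∈ e)
        = Finset.univ.biUnion (fun i => (edgesOf (p i) \ OPT).filter (fun e => w ∈ e)) := by
      ext e
      simp only [Finset.mem_filter, Finset.mem_sdiff, Finset.mem_biUnion, hP,
        Finset.mem_univ, true_and]
      tauto
    have h2 : (OPT ∩ P).filter (fun e => w ∈ e)
        = Finset.univ.biUnion (fun i => (OPT ∩ edgesOf (p i)).filter (fun e => w ∈ e)) := by
      ext e
      simp only [Finset.mem_filter, Finset.mem_inter, Finset.mem_biUnion, hP,
        Finset.mem_univ, true_and]
      tauto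
    rw [h1, h2]
    calc (Finset.univ.biUnion
          (fun i => (edgesOf (p i) \ OPT).filter (fun e => w ∈ e))).card
        ≤ ∑ i, ((edgesOf (p i) \ OPT).filter (fun e => w ∈ e)).card :=
          Finset.card_biUnion_le
      _ ≤ ∑ i, ((OPT ∩ edgesOf (p i)).filter (fun e => w ∈ e)).card :=
          Finset.sum_le_sum (fun i _ => per i)
      _ = (Finset.univ.biUnion
          (fun i => (OPT ∩ edgesOf (p i)).filter (fun e => w ∈ e))).card := by
          rw [Finset.card_biUnion]
          intro i _ j _ hij
          exact (hdisj i j hij).mono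
            ((Finset.filter_subset _ _).trans Finset.inter_subset_right)
            ((Finset.filter_subset _ _).trans Finset.inter_subset_right)
  omega
end

section
/- Under the hypotheses of the Parity Lemma (edge-disjoint augmenting trails P_1,...,P_{k-1} in APX △ OPT and an alternating trail P_k in the remaining edges starting with an OPT\APX edge whose first node is deficient w.r.t. the previous trails), every edge uv of P_k belongs to at most one triangle in APX △ P_k and to at most one triangle in OPT △ (P_1 ∪ ... ∪ P_k). -/
open Finset symmDiff

variable {V : Type*}

set_option linter.unusedSectionVars false

section S9
variable [DecidableEq V]

lemma s9_trailEdges_nil : trailEdges ([] : List V) = [] := rfl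
lemma s9_trailEdges_singleton (a : V) : trailEdges [a] = [] := rfl
lemma s9_trailEdges_cons_cons (a b : V) (t : List V) :
    trailEdges (a :: b :: t) = s(a, b) :: trailEdges (b :: t) := rfl

lemma s9_trailEdges_not_isDiag : ∀ (vs : List V), vs.Chain' (· ≠ ·) →
    ∀ e ∈ trailEdges vs, ¬ e.IsDiag
  | [], _, e, he => by simp [s9_trailEdges_nil] at he
  | [a], _, e, he => by simp [s9_trailEdges_singleton] at he
  | a :: b :: t, h, e, he => by
      rw [s9_trailEdges_cons_cons] at he
      rcases List.mem_cons.1 he with rfl | he'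
      · simpa [Sym2.mk_isDiag_iff] using (List.isChain_cons_cons.1 h).1
      · exact s9_trailEdges_not_isDiag (b :: t) (List.isChain_cons_cons.1 h).2 e he'

/-- endpoint edge term -/
def s9eT (M : Finset (Sym2 V)) : Option (Sym2 V) → ℤ
  | some e => if e ∈ M then -1 else 1
  | none => 0

/-- endpoint vertex term -/
def s9eV (M : Finset (Sym2 V)) (x : V) : Option V → Option (Sym2 V) → ℤ
  | some a, some e => if x = a then s9eT M (some e) else 0
  | _, _ => 0

lemma s9eV_le_one (M : Finset (Sym2 V)) (x : V) (vo : Option V) (eo : Option (Sym2 V)) :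
    s9eV M x vo eo ≤ 1 := by
  cases vo <;> cases eo <;> simp [s9eV, s9eT] <;> split_ifs <;> omega

lemma s9eV_nonneg (M : Finset (Sym2 V)) (x : V) (vo : Option V) (eo : Option (Sym2 V))
    (h : ∀ e, eo = some e → e ∉ M) : 0 ≤ s9eV M x vo eo := by
  cases vo <;> cases eo <;> simp [s9eV, s9eT] <;> split_ifs <;> simp_all <;> omega

lemma s9eV_nonpos (M : Finset (Sym2 V)) (x : V) (vo : Option V) (eo : Option (Sym2 V))
    (h : ∀ e, eo = some e → e ∈ M) : s9eV M x vo eo ≤ 0 := by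
  cases vo <;> cases eo <;> simp [s9eV, s9eT] <;> split_ifs <;> simp_all

lemma s9eV_eq_zero (M : Finset (Sym2 V)) (x : V) (vo : Option V) (eo : Option (Sym2 V))
    (h : vo ≠ some x) : s9eV M x vo eo = 0 := by
  cases vo <;> cases eo <;> simp [s9eV, s9eT] <;> intro h' <;> simp [h'] at h

lemma s9_filter_cons_length (p : Sym2 V → Prop) [DecidablePred p]
    (e : Sym2 V) (es : List (Sym2 V)) :
    ((e :: es).filter (fun a => p a)).length =
      (if p e then 1 else 0) + (es.filter (fun a => p a)).length := by
  rw [List.filter_cons]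
  split_ifs with h h' h' <;> simp_all <;> omega

/-- the fundamental counting identity along an alternating trail -/
lemma s9_trail_count (M : Finset (Sym2 V)) :
    ∀ vs : List V, vs.Chain' (· ≠ ·) →
      (trailEdges vs).Chain' (fun e f => e ∈ M ↔ f ∉ M) → ∀ x : V,
      (((trailEdges vs).filter (fun e => x ∈ e ∧ e ∉ M)).length : ℤ) -
        ((trailEdges vs).filter (fun e => x ∈ e ∧ e ∈ M)).length =
      s9eV M x vs.head? (trailEdges vs).head? +
        s9eV M x vs.getLast? (trailEdges vs).getLast?
  | [] => by intro _ _ x; simp [s9_trailEdges_nil, s9eV]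
  | [a] => by intro _ _ x; simp [s9_trailEdges_singleton, s9eV]
  | [a, b] => by
      intro hch _ x
      have hab : a ≠ b := (List.isChain_cons_cons.1 hch).1
      rw [s9_trailEdges_cons_cons]
      by_cases hxa : x = a <;> by_cases hxb : x = b <;>
        by_cases hm : s(a, b) ∈ M <;>
        simp_all [s9_trailEdges_singleton, s9eV, s9eT, Sym2.mem_iff, List.filter_cons]
  | a :: b :: u :: t => by
      intro hch halt x
      have hab : a ≠ b := (List.isChain_cons_cons.1 hch).1
      have hch' := (List.isChain_cons_cons.1 hch).2
      rw [s9_trailEdges_cons_cons] at halt ⊢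
      rw [s9_trailEdges_cons_cons (b := u)] at halt
      obtain ⟨h01, halt'⟩ := List.isChain_cons_cons.1 halt
      rw [← s9_trailEdges_cons_cons (b := u)] at halt'
      have ih := s9_trail_count M (b :: u :: t) hch' halt' x
      have hLv : (a :: b :: u :: t).getLast? = (b :: u :: t).getLast? :=
        List.getLast?_cons_cons ..
      have hLe : (s(a, b) :: trailEdges (b :: u :: t)).getLast? =
          (trailEdges (b :: u :: t)).getLast? := by
        rw [s9_trailEdges_cons_cons (b := u)]; exact List.getLast?_cons_cons ..
      rw [hLv, hLe]
      have hhead : (trailEdges (b :: u :: t)).head? = some s(b, u) := by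
        rw [s9_trailEdges_cons_cons (b := u)]; rfl
      rw [hhead] at ih
      simp only [List.head?_cons] at ih ⊢
      rw [s9_filter_cons_length (fun e => x ∈ e ∧ e ∉ M),
        s9_filter_cons_length (fun e => x ∈ e ∧ e ∈ M)]
      have hstep : ((if x ∈ s(a, b) ∧ s(a, b) ∉ M then 1 else 0) : ℤ) -
          (if x ∈ s(a, b) ∧ s(a, b) ∈ M then 1 else 0) +
          s9eV M x (some b) (some s(b, u)) = s9eV M x (some a) (some s(a, b)) := by
        have hm2 : (s(b, u) ∈ M) ↔ ¬ (s(a, b) ∈ M) := by tauto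
        clear ih halt' h01 hch hch' hLv hLe hhead
        by_cases hxa : x = a <;> by_cases hxb : x = b
        · exact absurd (hxa.symm.trans hxb) hab
        all_goals by_cases hm : s(a, b) ∈ M <;>
          simp [s9eV, s9eT, Sym2.mem_iff, hxa, hxb, hm, hm2.2, (hm2.1), hab] <;>
          simp [hm2, hm, Ne.symm hab]
      push_cast
      push_cast at ih
      omega

lemma s9_alt_count (M : Finset (Sym2 V)) : ∀ es : List (Sym2 V),
    es.Chain' (fun e f => e ∈ M ↔ f ∉ M) →
    2 * ((es.filter (fun e => e ∉ M)).length : ℤ) =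
      2 * ((es.filter (fun e => e ∈ M)).length : ℤ) + s9eT M es.head? + s9eT M es.getLast?
  | [], _ => by simp [s9eT]
  | [e], _ => by by_cases h : e ∈ M <;> simp [s9eT, h, List.filter_cons]
  | e :: f :: t, h => by
      obtain ⟨h1, h2⟩ := List.isChain_cons_cons.1 h
      have ih := s9_alt_count M (f :: t) h2
      rw [List.getLast?_cons_cons]
      rw [s9_filter_cons_length (fun e => e ∉ M), s9_filter_cons_length (fun e => e ∈ M)]
      simp only [List.head?_cons] at ih ⊢
      have hstep : (2 * ((if e ∉ M then 1 else 0) : ℤ) + s9eT M (some f)) =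
          2 * (if e ∈ M then 1 else 0) + s9eT M (some e) := by
        by_cases he : e ∈ M
        · simp [s9eT, he, h1.mp he]
        · have : f ∈ M := by tauto
          simp [s9eT, he, this]
      push_cast
      push_cast at ih
      omega

lemma s9_ends_notMem (M : Finset (Sym2 V)) (es : List (Sym2 V))
    (hc : es.Chain' (fun e f => e ∈ M ↔ f ∉ M))
    (hcount : (es.filter (fun e => e ∉ M)).length = (es.filter (fun e => e ∈ M)).length + 1) :
    (∀ e, es.head? = some e → e ∉ M) ∧ (∀ e, es.getLast? = some e → e ∉ M) := by
  have h := s9_alt_count M es hc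
  rw [hcount] at h
  have hh : s9eT M es.head? ≤ 1 := by cases es.head? <;> simp [s9eT] <;> split_ifs <;> omega
  have hl : s9eT M es.getLast? ≤ 1 := by
    cases es.getLast? <;> simp [s9eT] <;> split_ifs <;> omega
  constructor
  · intro e he hem
    rw [he] at h hh
    have hv : s9eT M (some e) = -1 := by simp [s9eT, hem]
    rw [hv] at h
    push_cast at h
    omega
  · intro e he hem
    rw [he] at h hl
    have hv : s9eT M (some e) = -1 := by simp [s9eT, hem]
    rw [hv] at h
    push_cast at h
    omega

lemma s9_toFinset_sdiff (es : List (Sym2 V)) (M : Finset (Sym2 V)) :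
    es.toFinset \ M = ((es.filter (fun e => e ∉ M)).toFinset : Finset (Sym2 V)) := by
  ext e; simp [List.mem_filter]

lemma s9_toFinset_inter (es : List (Sym2 V)) (M : Finset (Sym2 V)) :
    es.toFinset ∩ M = ((es.filter (fun e => e ∈ M)).toFinset : Finset (Sym2 V)) := by
  ext e; simp [List.mem_filter]

lemma s9_card_symmDiff {α : Type*} [DecidableEq α] (A B : Finset α) :
    (A ∆ B).card + (A ∩ B).card = A.card + (B \ A).card := by
  have h1 : A ∆ B = (A \ B) ∪ (B \ A) := by
    rw [symmDiff_def, sup_eq_union]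
  rw [h1, Finset.card_union_of_disjoint disjoint_sdiff_sdiff]
  have h2 := Finset.card_sdiff_add_card_inter A B
  omega

variable [Fintype V]

lemma s9_mem_nbrs {S : Finset (Sym2 V)} {x y : V} : y ∈ nbrs S x ↔ s(x, y) ∈ S := by
  simp [nbrs]

lemma s9_nbrs_symmDiff (M T : Finset (Sym2 V)) (x : V) :
    nbrs (M ∆ T) x = nbrs M x ∆ nbrs T x := by
  ext y; simp [s9_mem_nbrs, Finset.mem_symmDiff]

lemma s9_nbrs_inter (M T : Finset (Sym2 V)) (x : V) :
    nbrs (M ∩ T) x = nbrs M x ∩ nbrs T x := by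
  ext y; simp [s9_mem_nbrs]

lemma s9_nbrs_sdiff (M T : Finset (Sym2 V)) (x : V) :
    nbrs (M \ T) x = nbrs M x \ nbrs T x := by
  ext y; simp [s9_mem_nbrs]

lemma s9_nbrs_union (M T : Finset (Sym2 V)) (x : V) :
    nbrs (M ∪ T) x = nbrs M x ∪ nbrs T x := by
  ext y; simp [s9_mem_nbrs, Finset.mem_union]

lemma s9_nbrs_biUnion {ι : Type*} [DecidableEq ι] (s : Finset ι) (f : ι → Finset (Sym2 V)) (x : V) :
    nbrs (s.biUnion f) x = s.biUnion (fun i => nbrs (f i) x) := by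
  ext y; simp [s9_mem_nbrs]

lemma s9_nbrs_disjoint {M T : Finset (Sym2 V)} (h : Disjoint M T) (x : V) :
    Disjoint (nbrs M x) (nbrs T x) := by
  rw [Finset.disjoint_left] at h ⊢
  intro y hy hy'
  exact h (s9_mem_nbrs.1 hy) (s9_mem_nbrs.1 hy')

/-- degree identity -/
lemma s9_deg_identity (M T : Finset (Sym2 V)) (x : V) :
    (nbrs (M ∆ T) x).card + (nbrs (T ∩ M) x).card
      = (nbrs M x).card + (nbrs (T \ M) x).card := by
  rw [s9_nbrs_symmDiff, s9_nbrs_inter, s9_nbrs_sdiff, Finset.inter_comm]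
  exact s9_card_symmDiff (nbrs M x) (nbrs T x)

lemma s9_card_nbrs_filter (es : List (Sym2 V)) (hnd : es.Nodup)
    (hnl : ∀ e ∈ es, ¬ e.IsDiag) (x : V) :
    (nbrs es.toFinset x).card = (es.filter (fun e => x ∈ e)).length := by
  rw [← List.toFinset_card_of_nodup (hnd.filter _)]
  apply Finset.card_bij (fun y _ => s(x, y))
  · intro y hy
    rw [List.mem_toFinset, List.mem_filter]
    exact ⟨List.mem_toFinset.1 (s9_mem_nbrs.1 hy), by simp⟩
  · intro y1 h1 y2 h2 heq
    rcases Sym2.eq_iff.1 heq with ⟨_, h⟩ | ⟨hx, h⟩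
    · exact h
    · exact h.trans hx
  · intro e he
    rw [List.mem_toFinset, List.mem_filter] at he
    obtain ⟨y, rfl⟩ := Sym2.mem_iff_exists.1 (by simpa using he.2)
    exact ⟨y, s9_mem_nbrs.2 (List.mem_toFinset.2 he.1), rfl⟩

lemma s9_trail_nbrs (M : Finset (Sym2 V)) (vs : List V) (hch : vs.Chain' (· ≠ ·))
    (hnd : (trailEdges vs).Nodup)
    (halt : (trailEdges vs).Chain' (fun e f => e ∈ M ↔ f ∉ M)) (x : V) :
    ((nbrs (edgesOf vs \ M) x).card : ℤ) - (nbrs (edgesOf vs ∩ M) x).card =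
      s9eV M x vs.head? (trailEdges vs).head? + s9eV M x vs.getLast? (trailEdges vs).getLast? := by
  have hnl := s9_trailEdges_not_isDiag vs hch
  rw [show edgesOf vs \ M = ((trailEdges vs).filter (fun e => e ∉ M)).toFinset from
        s9_toFinset_sdiff _ M,
      show edgesOf vs ∩ M = ((trailEdges vs).filter (fun e => e ∈ M)).toFinset from
        s9_toFinset_inter _ M]
  rw [s9_card_nbrs_filter _ (hnd.filter _) (fun e he => hnl e (List.mem_of_mem_filter he)) x]
  rw [s9_card_nbrs_filter _ (hnd.filter _) (fun e he => hnl e (List.mem_of_mem_filter he)) x]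
  have e1 : ((trailEdges vs).filter (fun e => e ∉ M)).filter (fun e => x ∈ e)
      = (trailEdges vs).filter (fun e => x ∈ e ∧ e ∉ M) := by
    rw [List.filter_filter]
    apply List.filter_congr
    intro e _
    simp [Bool.and_comm]
  have e2 : ((trailEdges vs).filter (fun e => e ∈ M)).filter (fun e => x ∈ e)
      = (trailEdges vs).filter (fun e => x ∈ e ∧ e ∈ M) := by
    rw [List.filter_filter]
    apply List.filter_congr
    intro e _
    simp [Bool.and_comm]
  rw [e1, e2]
  exact s9_trail_count M vs hch halt x

lemma s9_aug_out_count (M : Finset (Sym2 V)) (vs : List V) (hnd : (trailEdges vs).Nodup)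
    (hcard : (M ∆ edgesOf vs).card = M.card + 1) :
    ((trailEdges vs).filter (fun e => e ∉ M)).length =
      ((trailEdges vs).filter (fun e => e ∈ M)).length + 1 := by
  have h := s9_card_symmDiff M (edgesOf vs)
  rw [hcard] at h
  have h1 : (edgesOf vs \ M).card = ((trailEdges vs).filter (fun e => e ∉ M)).length := by
    rw [show edgesOf vs \ M = _ from s9_toFinset_sdiff (trailEdges vs) M]
    exact List.toFinset_card_of_nodup (hnd.filter _)
  have h2 : (M ∩ edgesOf vs).card = ((trailEdges vs).filter (fun e => e ∈ M)).length := by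
    rw [Finset.inter_comm, show edgesOf vs ∩ M = _ from s9_toFinset_inter (trailEdges vs) M]
    exact List.toFinset_card_of_nodup (hnd.filter _)
  omega

lemma s9_trail_le_out (M : Finset (Sym2 V)) (vs : List V) (hch : vs.Chain' (· ≠ ·))
    (hnd : (trailEdges vs).Nodup)
    (halt : (trailEdges vs).Chain' (fun e f => e ∈ M ↔ f ∉ M))
    (hh : ∀ e, (trailEdges vs).head? = some e → e ∉ M)
    (hl : ∀ e, (trailEdges vs).getLast? = some e → e ∉ M) (x : V) :
    (nbrs (edgesOf vs ∩ M) x).card ≤ (nbrs (edgesOf vs \ M) x).card := by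
  have h := s9_trail_nbrs M vs hch hnd halt x
  have h1 := s9eV_nonneg M x vs.head? (trailEdges vs).head? hh
  have h2 := s9eV_nonneg M x vs.getLast? (trailEdges vs).getLast? hl
  omega

lemma s9_trail_le_in (M : Finset (Sym2 V)) (vs : List V) (hch : vs.Chain' (· ≠ ·))
    (hnd : (trailEdges vs).Nodup)
    (halt : (trailEdges vs).Chain' (fun e f => e ∈ M ↔ f ∉ M))
    (hh : ∀ e, (trailEdges vs).head? = some e → e ∈ M)
    (hl : ∀ e, (trailEdges vs).getLast? = some e → e ∈ M) (x : V) :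
    (nbrs (edgesOf vs \ M) x).card ≤ (nbrs (edgesOf vs ∩ M) x).card := by
  have h := s9_trail_nbrs M vs hch hnd halt x
  have h1 := s9eV_nonpos M x vs.head? (trailEdges vs).head? hh
  have h2 := s9eV_nonpos M x vs.getLast? (trailEdges vs).getLast? hl
  omega

lemma s9_trail_pk2 (M : Finset (Sym2 V)) (vs : List V) (hch : vs.Chain' (· ≠ ·))
    (hnd : (trailEdges vs).Nodup)
    (halt : (trailEdges vs).Chain' (fun e f => e ∈ M ↔ f ∉ M))
    (hh : ∀ e, (trailEdges vs).head? = some e → e ∈ M)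
    (x : V) (hx : vs.getLast? ≠ some x) :
    (nbrs (edgesOf vs \ M) x).card ≤ (nbrs (edgesOf vs ∩ M) x).card := by
  have h := s9_trail_nbrs M vs hch hnd halt x
  have h1 := s9eV_nonpos M x vs.head? (trailEdges vs).head? hh
  have h2 := s9eV_eq_zero M x vs.getLast? (trailEdges vs).getLast? hx
  omega

lemma s9_three_nbrs {S : Finset (Sym2 V)} {x a b c : V}
    (ha : s(x, a) ∈ S) (hb : s(x, b) ∈ S) (hc : s(x, c) ∈ S)
    (hab : a ≠ b) (hac : a ≠ c) (hbc : b ≠ c) : 3 ≤ (nbrs S x).card := by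
  have hsub : ({a, b, c} : Finset V) ⊆ nbrs S x := by
    intro y hy
    simp only [Finset.mem_insert, Finset.mem_singleton] at hy
    rcases hy with rfl | rfl | rfl
    · exact s9_mem_nbrs.2 ha
    · exact s9_mem_nbrs.2 hb
    · exact s9_mem_nbrs.2 hc
  have : ({a, b, c} : Finset V).card = 3 := by
    rw [Finset.card_insert_of_notMem (by simp [hab, hac]),
      Finset.card_insert_of_notMem (by simp [hbc])]
    simp
  rw [← this]
  exact Finset.card_le_card hsub

lemma s9_trail_pk0 (M : Finset (Sym2 V)) (vs : List V) (hch : vs.Chain' (· ≠ ·))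
    (hnd : (trailEdges vs).Nodup)
    (halt : (trailEdges vs).Chain' (fun e f => e ∈ M ↔ f ∉ M))
    (x : V) (hx : vs.getLast? ≠ some x) :
    ((nbrs (edgesOf vs \ M) x).card : ℤ) ≤ (nbrs (edgesOf vs ∩ M) x).card +
      (if vs.head? = some x then 1 else 0) := by
  have h := s9_trail_nbrs M vs hch hnd halt x
  have h2 := s9eV_eq_zero M x vs.getLast? (trailEdges vs).getLast? hx
  split_ifs with hh
  · have h1 := s9eV_le_one M x vs.head? (trailEdges vs).head?
    omega
  · have h1 := s9eV_eq_zero M x vs.head? (trailEdges vs).head? hh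
    omega

lemma s9_trail_pk1 (M : Finset (Sym2 V)) (vs : List V) (hch : vs.Chain' (· ≠ ·))
    (hnd : (trailEdges vs).Nodup)
    (halt : (trailEdges vs).Chain' (fun e f => e ∈ M ↔ f ∉ M))
    (hh : ∀ e, (trailEdges vs).head? = some e → e ∉ M)
    (x : V) (hx : vs.getLast? ≠ some x) :
    (nbrs (edgesOf vs ∩ M) x).card ≤ (nbrs (edgesOf vs \ M) x).card := by
  have h := s9_trail_nbrs M vs hch hnd halt x
  have h1 := s9eV_nonneg M x vs.head? (trailEdges vs).head? hh
  have h2 := s9eV_eq_zero M x vs.getLast? (trailEdges vs).getLast? hx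
  omega

end S9

theorem stmt_9 [Fintype V] [DecidableEq V] (G : SimpleGraph V) [DecidableRel G.Adj]
    (APX OPT : Finset (Sym2 V))
    (hAPX : IsTF2M G APX) (hOPT : IsTF2M G OPT)
    (hdom : ∀ u : V, (nbrs APX u).card ≤ (nbrs OPT u).card)
    (k : ℕ) (p : Fin k → List V)
    (haug : ∀ i, IsAugmenting G APX (p i))
    (hsub : ∀ i, edgesOf (p i) ⊆ APX ∆ OPT)
    (hdisj : ∀ i j, i ≠ j → Disjoint (edgesOf (p i)) (edgesOf (p j)))
    (pk : List V)
    (halt : IsAlternating APX pk)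
    (hpksub : edgesOf pk ⊆ (APX ∆ OPT) \ (Finset.univ.biUnion fun i => edgesOf (p i)))
    (hfirstedge : FirstEdgeIn pk (OPT \ APX))
    (hfirstnode : ∀ u : V, pk.head? = some u →
      Deficient APX OPT (Finset.univ.biUnion fun i => edgesOf (p i)) u) :
    ∀ u v : V, s(u, v) ∈ edgesOf pk →
      (∀ w w' : V, TriIn (APX ∆ edgesOf pk) u v w →
        TriIn (APX ∆ edgesOf pk) u v w' → w = w') ∧
      (∀ w w' : V,
        TriIn (OPT ∆ ((Finset.univ.biUnion fun i => edgesOf (p i)) ∪ edgesOf pk)) u v w →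
        TriIn (OPT ∆ ((Finset.univ.biUnion fun i => edgesOf (p i)) ∪ edgesOf pk)) u v w' →
        w = w') := by
  classical
  set E' : Finset (Sym2 V) := Finset.univ.biUnion (fun i => edgesOf (p i)) with hE'def
  obtain ⟨⟨hlenpk, hchpk, hndpk⟩, haltpk⟩ := halt
  -- facts about the trails p i
  have htrail : ∀ i, (p i).Chain' (· ≠ ·) ∧ (trailEdges (p i)).Nodup ∧
      (trailEdges (p i)).Chain' (fun e f => e ∈ APX ↔ f ∉ APX) := fun i =>
    ⟨(haug i).1.1.2.1, (haug i).1.1.2.2, (haug i).1.2⟩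
  have hendsA : ∀ i, (∀ e, (trailEdges (p i)).head? = some e → e ∉ APX) ∧
      (∀ e, (trailEdges (p i)).getLast? = some e → e ∉ APX) := fun i =>
    s9_ends_notMem APX _ (haug i).1.2
      (s9_aug_out_count APX _ (haug i).1.1.2.2 (haug i).2.2)
  have hANle : ∀ i x, (nbrs (edgesOf (p i) ∩ APX) x).card ≤
      (nbrs (edgesOf (p i) \ APX) x).card := fun i x =>
    s9_trail_le_out APX _ (htrail i).1 (htrail i).2.1 (htrail i).2.2
      (hendsA i).1 (hendsA i).2 x
  have hmemE : ∀ e ∈ E', e ∈ OPT ↔ e ∉ APX := by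
    intro e he
    rw [hE'def, Finset.mem_biUnion] at he
    obtain ⟨i, _, hi⟩ := he
    have := hsub i hi
    rw [Finset.mem_symmDiff] at this
    tauto
  have hpkmem : ∀ e ∈ edgesOf pk, e ∈ OPT ↔ e ∉ APX := by
    intro e he
    have := (Finset.mem_sdiff.1 (hpksub he)).1
    rw [Finset.mem_symmDiff] at this
    tauto
  have hheadpk : ∀ e, (trailEdges pk).head? = some e → e ∉ APX := by
    intro e he
    obtain ⟨e0, he0mem, he0⟩ := hfirstedge
    have : e = e0 := Option.some.inj (he.symm.trans he0)
    rw [this]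
    exact (Finset.mem_sdiff.1 he0mem).2
  -- summing over the disjoint family
  have hdisjN : ∀ (f : Fin k → Finset (Sym2 V)), (∀ i, f i ⊆ edgesOf (p i)) → ∀ x,
      (nbrs (Finset.univ.biUnion f) x).card = ∑ i, (nbrs (f i) x).card := by
    intro f hf x
    rw [s9_nbrs_biUnion, Finset.card_biUnion]
    intro i _ j _ hij
    exact s9_nbrs_disjoint (Finset.disjoint_of_subset_left (hf i)
      (Finset.disjoint_of_subset_right (hf j) (hdisj i j hij))) x
  have hE1 : E' ∩ APX = Finset.univ.biUnion (fun i => edgesOf (p i) ∩ APX) := by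
    ext e
    simp only [hE'def, Finset.mem_inter, Finset.mem_biUnion, Finset.mem_univ, true_and]
    tauto
  have hE2 : E' \ APX = Finset.univ.biUnion (fun i => edgesOf (p i) \ APX) := by
    ext e
    simp only [hE'def, Finset.mem_sdiff, Finset.mem_biUnion, Finset.mem_univ, true_and]
    tauto
  have hEle : ∀ x, (nbrs (E' ∩ APX) x).card ≤ (nbrs (E' \ APX) x).card := by
    intro x
    rw [hE1, hE2, hdisjN _ (fun i => Finset.inter_subset_left) x,
      hdisjN _ (fun i => Finset.sdiff_subset) x]
    exact Finset.sum_le_sum (fun i _ => hANle i x)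
  -- deficiency forces small APX-degree at the first node of pk
  have hdefA : ∀ x, pk.head? = some x → (nbrs APX x).card ≤ 1 := by
    intro x hx
    have hd : (nbrs (APX \ E') x).card < (nbrs (OPT \ E') x).card := hfirstnode x hx
    have h1 : (nbrs (APX \ E') x).card + (nbrs (APX ∩ E') x).card = (nbrs APX x).card := by
      rw [s9_nbrs_sdiff, s9_nbrs_inter]
      exact Finset.card_sdiff_add_card_inter _ _
    have h2 : (nbrs (OPT \ E') x).card + (nbrs (OPT ∩ E') x).card = (nbrs OPT x).card := by
      rw [s9_nbrs_sdiff, s9_nbrs_inter]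
      exact Finset.card_sdiff_add_card_inter _ _
    have h3 : (nbrs (APX ∩ E') x).card ≤ (nbrs (OPT ∩ E') x).card := by
      have f1 : APX ∩ E' = E' ∩ APX := Finset.inter_comm _ _
      have f2 : OPT ∩ E' = E' \ APX := by
        ext e
        simp only [Finset.mem_inter, Finset.mem_sdiff]
        constructor
        · rintro ⟨ho, he⟩; exact ⟨he, (hmemE e he).1 ho⟩
        · rintro ⟨he, ha⟩; exact ⟨(hmemE e he).2 ha, he⟩
      rw [f1, f2]
      exact hEle x
    have h4 := hOPT.1.2 x
    omega
  -- the two degree bounds: only the last vertex of pk may have degree three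
  have bound1 : ∀ x, pk.getLast? ≠ some x → (nbrs (APX ∆ edgesOf pk) x).card ≤ 2 := by
    intro x hx
    have hid := s9_deg_identity APX (edgesOf pk) x
    have hkey := s9_trail_pk0 APX pk hchpk hndpk haltpk x hx
    by_cases hh : pk.head? = some x
    · have hA := hdefA x hh
      rw [if_pos hh] at hkey
      omega
    · rw [if_neg hh] at hkey
      have hA := hAPX.1.2 x
      omega
  have bound2 : ∀ x, pk.getLast? ≠ some x →
      (nbrs (OPT ∆ (E' ∪ edgesOf pk)) x).card ≤ 2 := by
    intro x hx
    have hid := s9_deg_identity OPT (E' ∪ edgesOf pk) x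
    have hdisjE : Disjoint E' (edgesOf pk) :=
      Finset.disjoint_right.2 fun e he => (Finset.mem_sdiff.1 (hpksub he)).2
    have hsplit1 : (E' ∪ edgesOf pk) \ OPT = (E' \ OPT) ∪ (edgesOf pk \ OPT) :=
      Finset.union_sdiff_distrib _ _ _
    have hsplit2 : (E' ∪ edgesOf pk) ∩ OPT = (E' ∩ OPT) ∪ (edgesOf pk ∩ OPT) :=
      Finset.union_inter_distrib_right _ _ _
    have hc1 : (nbrs ((E' ∪ edgesOf pk) \ OPT) x).card =
        (nbrs (E' \ OPT) x).card + (nbrs (edgesOf pk \ OPT) x).card := by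
      rw [hsplit1, s9_nbrs_union, Finset.card_union_of_disjoint
        (s9_nbrs_disjoint (hdisjE.mono Finset.sdiff_subset Finset.sdiff_subset) x)]
    have hc2 : (nbrs ((E' ∪ edgesOf pk) ∩ OPT) x).card =
        (nbrs (E' ∩ OPT) x).card + (nbrs (edgesOf pk ∩ OPT) x).card := by
      rw [hsplit2, s9_nbrs_union, Finset.card_union_of_disjoint
        (s9_nbrs_disjoint (hdisjE.mono Finset.inter_subset_left Finset.inter_subset_left) x)]
    have hE'part : (nbrs (E' \ OPT) x).card ≤ (nbrs (E' ∩ OPT) x).card := by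
      have f1 : E' \ OPT = E' ∩ APX := by
        ext e
        simp only [Finset.mem_inter, Finset.mem_sdiff]
        constructor
        · rintro ⟨he, ho⟩
          refine ⟨he, ?_⟩
          by_contra ha
          exact ho ((hmemE e he).2 ha)
        · rintro ⟨he, ha⟩
          exact ⟨he, fun ho => (hmemE e he).1 ho ha⟩
      have f2 : E' ∩ OPT = E' \ APX := by
        ext e
        simp only [Finset.mem_inter, Finset.mem_sdiff]
        constructor
        · rintro ⟨he, ho⟩; exact ⟨he, (hmemE e he).1 ho⟩
        · rintro ⟨he, ha⟩; exact ⟨he, (hmemE e he).2 ha⟩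
      rw [f1, f2]
      exact hEle x
    have hpkpart : (nbrs (edgesOf pk \ OPT) x).card ≤ (nbrs (edgesOf pk ∩ OPT) x).card := by
      have f1 : edgesOf pk \ OPT = edgesOf pk ∩ APX := by
        ext e
        simp only [Finset.mem_inter, Finset.mem_sdiff]
        constructor
        · rintro ⟨he, ho⟩
          refine ⟨he, ?_⟩
          by_contra ha
          exact ho ((hpkmem e he).2 ha)
        · rintro ⟨he, ha⟩
          exact ⟨he, fun ho => (hpkmem e he).1 ho ha⟩
      have f2 : edgesOf pk ∩ OPT = edgesOf pk \ APX := by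
        ext e
        simp only [Finset.mem_inter, Finset.mem_sdiff]
        constructor
        · rintro ⟨he, ho⟩; exact ⟨he, (hpkmem e he).1 ho⟩
        · rintro ⟨he, ha⟩; exact ⟨he, (hpkmem e he).2 ha⟩
      rw [f1, f2]
      exact s9_trail_pk1 APX pk hchpk hndpk haltpk hheadpk x hx
    have hO := hOPT.1.2 x
    omega
  -- conclusion
  intro u v _
  constructor
  · intro w w' h1 h2
    by_contra hne
    obtain ⟨hune, hvw, huw, he1, he2, he3⟩ := h1
    obtain ⟨-, hvw', huw', -, he2', he3'⟩ := h2
    by_cases hu : pk.getLast? = some u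
    · have hv : pk.getLast? ≠ some v := fun hc => hune (Option.some.inj (hu.symm.trans hc))
      have h3 := s9_three_nbrs (x := v) (a := u) (b := w) (c := w')
        (by rw [Sym2.eq_swap]; exact he1) he2 he2' huw huw' hne
      have hb := bound1 v hv
      omega
    · have h3 := s9_three_nbrs (x := u) (a := v) (b := w) (c := w')
        he1 he3 he3' hvw hvw' hne
      have hb := bound1 u hu
      omega
  · intro w w' h1 h2
    by_contra hne
    obtain ⟨hune, hvw, huw, he1, he2, he3⟩ := h1
    obtain ⟨-, hvw', huw', -, he2', he3'⟩ := h2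
    by_cases hu : pk.getLast? = some u
    · have hv : pk.getLast? ≠ some v := fun hc => hune (Option.some.inj (hu.symm.trans hc))
      have h3 := s9_three_nbrs (x := v) (a := u) (b := w) (c := w')
        (by rw [Sym2.eq_swap]; exact he1) he2 he2' huw huw' hne
      have hb := bound2 v hv
      omega
    · have h3 := s9_three_nbrs (x := u) (a := v) (b := w) (c := w')
        he1 he3 he3' hvw hvw' hne
      have hb := bound2 u hu
      omega
end
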